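/- Let X be a compact metrizable space such that S² is an absolute extensor of X (dim X ≤ 2). If ℝP^∞ is an absolute extensor of X (dim_{ℤ/2} X ≤ 1), then ℝP² is an absolute extensor of X. -/

import Mathlib

noncomputable section
open Metric Set

open Metric Set

abbrev USphere (n : ℕ) : Type :=
  (sphere (0 : EuclideanSpace ℝ (Fin (n+1))) 1 : Set (EuclideanSpace ℝ (Fin (n+1))))

def antipodalSetoid (n : ℕ) : Setoid (USphere n) where
  r x y := (x : EuclideanSpace ℝ (Fin (n+1))) = (y : EuclideanSpace ℝ (Fin (n+1)))
    ∨ (x : EuclideanSpace ℝ (Fin (n+1))) = -(y : EuclideanSpace ℝ (Fin (n+1)))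
  iseqv := by
    constructor
    · intro x; exact Or.inl rfl
    · rintro x y (h | h)
      · exact Or.inl h.symm
      · right; rw [h]; simp
    · rintro x y z (h1 | h1) (h2 | h2)
      · exact Or.inl (h1.trans h2)
      · right; rw [h1, h2]
      · right; rw [h1, h2]
      · left; rw [h1, h2]; simp

def RP (n : ℕ) : Type := Quotient (antipodalSetoid n)

instance (n : ℕ) : TopologicalSpace (RP n) := by unfold RP; infer_instance

/-- `K` is an absolute extensor of `X`: every continuous map into `K` defined on a closed
subset of `X` extends to a continuous map on all of `X`. -/
def IsAbsoluteExtensor (X : Type*) [TopologicalSpace X] (K : Type*) [TopologicalSpace K] : Prop :=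
  ∀ A : Set X, IsClosed A → ∀ f : C(A, K), ∃ g : C(X, K), ∀ a : A, g a = f a

/-- The covering projection from the sphere to projective space. -/
def pcov (n : ℕ) : USphere n → RP n := fun z => Quotient.mk (antipodalSetoid n) z

def coordIncl (n : ℕ) (x : EuclideanSpace ℝ (Fin (n+1))) : EuclideanSpace ℝ (Fin (n+2)) :=
  WithLp.toLp 2 (fun i : Fin (n+2) => if h : (i : ℕ) < n + 1 then x ⟨i, h⟩ else 0)

lemma coordIncl_mem (n : ℕ) (x : USphere n) :
    coordIncl n (x : EuclideanSpace ℝ (Fin (n+1))) ∈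
      sphere (0 : EuclideanSpace ℝ (Fin (n+2))) 1 := by
  obtain ⟨x, hx⟩ := x
  rw [mem_sphere_iff_norm, sub_zero, EuclideanSpace.norm_eq] at hx ⊢
  have h2 : ∑ i : Fin (n+2), ‖coordIncl n x i‖ ^ 2 = ∑ i : Fin (n+1), ‖x i‖ ^ 2 := by
    rw [Fin.sum_univ_castSucc]
    simp [coordIncl, Fin.is_lt, Fin.is_le]
  rw [h2]; exact hx

lemma coordIncl_neg (n : ℕ) (x : EuclideanSpace ℝ (Fin (n+1))) :
    coordIncl n (-x) = -(coordIncl n x) := by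
  ext i
  simp only [coordIncl, PiLp.toLp_apply, PiLp.neg_apply]
  split_ifs <;> simp

/-- The equatorial inclusion of spheres. -/
def sphereIncl (n : ℕ) : USphere n → USphere (n+1) :=
  fun x => ⟨coordIncl n (x : EuclideanSpace ℝ (Fin (n+1))), coordIncl_mem n x⟩

/-- The standard (equatorial) inclusion `ℝPⁿ → ℝP^(n+1)`. -/
def rpIncl (n : ℕ) : RP n → RP (n+1) :=
  Quotient.map' (sphereIncl n) (by
    rintro x y (h | h)
    · left; show coordIncl n _ = coordIncl n _; rw [h]
    · right
      show coordIncl n (x : EuclideanSpace ℝ (Fin (n+1))) = -(coordIncl n _)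
      rw [h, coordIncl_neg])
open Metric Set

/-- The real Hilbert space ℓ². -/
abbrev Hilbertl2 : Type := lp (fun _ : ℕ => ℝ) 2

def antipodalSetoidInf : Setoid (sphere (0 : Hilbertl2) 1 : Set Hilbertl2) where
  r x y := (x : Hilbertl2) = (y : Hilbertl2) ∨ (x : Hilbertl2) = -(y : Hilbertl2)
  iseqv := by
    constructor
    · intro x; exact Or.inl rfl
    · rintro x y (h | h)
      · exact Or.inl h.symm
      · right; rw [h]; simp
    · rintro x y z (h1 | h1) (h2 | h2)
      · exact Or.inl (h1.trans h2)
      · right; rw [h1, h2]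
      · right; rw [h1, h2]
      · left; rw [h1, h2]; simp

/-- Infinite real projective space: the quotient of the unit sphere of ℓ² by the
antipodal identification. -/
def RPInf : Type := Quotient antipodalSetoidInf

instance : TopologicalSpace RPInf := by unfold RPInf; infer_instance
abbrev UBall3 : Type := (closedBall (0 : EuclideanSpace ℝ (Fin 3)) 1 : Set (EuclideanSpace ℝ (Fin 3)))

def hemiLift (x : EuclideanSpace ℝ (Fin 3)) : EuclideanSpace ℝ (Fin 4) :=
  WithLp.toLp 2 (fun i : Fin 4 => if h : (i : ℕ) < 3 then x ⟨i, h⟩ else Real.sqrt (1 - ‖x‖ ^ 2))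

lemma hemiLift_mem (x : UBall3) :
    hemiLift (x : EuclideanSpace ℝ (Fin 3)) ∈ sphere (0 : EuclideanSpace ℝ (Fin 4)) 1 := by
  obtain ⟨x, hx⟩ := x
  rw [mem_closedBall, dist_zero_right] at hx
  have hx2 : ‖x‖ ^ 2 ≤ 1 := by nlinarith [norm_nonneg x]
  have hsum : ∑ i : Fin 3, ‖x i‖ ^ 2 = ‖x‖ ^ 2 := by
    rw [EuclideanSpace.norm_eq, Real.sq_sqrt]
    positivity
  rw [mem_sphere_iff_norm, sub_zero, EuclideanSpace.norm_eq]
  have h2 : ∑ i : Fin 4, ‖hemiLift x i‖ ^ 2 = 1 := by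
    rw [Fin.sum_univ_castSucc]
    have hlast : ‖hemiLift x (Fin.last 3)‖ ^ 2 = 1 - ‖x‖ ^ 2 := by
      simp only [hemiLift, Fin.last, PiLp.toLp_apply]
      rw [dif_neg (by norm_num)]
      rw [Real.norm_eq_abs, sq_abs, Real.sq_sqrt (by linarith)]
    have hcast : ∀ i : Fin 3, ‖hemiLift x (Fin.castSucc i)‖ ^ 2 = ‖x i‖ ^ 2 := by
      intro i
      simp only [hemiLift, PiLp.toLp_apply]
      rw [dif_pos (by exact i.is_lt)]
      congr 1
    rw [hlast]
    rw [Finset.sum_congr rfl (fun i _ => hcast i), hsum]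
    ring
  rw [h2, Real.sqrt_one]

/-- The quotient map `q₃ : B³ → ℝP³` (identify `B³` with the upper hemisphere of `S³`). -/
def q3 : UBall3 → RP 3 := fun x => pcov 3 ⟨hemiLift (x : EuclideanSpace ℝ (Fin 3)), hemiLift_mem x⟩

/-! ### The first modification of ℝP³ -/

/-- The disk of radius 1/3 (the meridian disk `D`). -/
abbrev DiskThird : Type :=
  (closedBall (0 : EuclideanSpace ℝ (Fin 2)) (1/3) : Set (EuclideanSpace ℝ (Fin 2)))

/-- The parametrization of the solid torus `L ⊂ B³`, obtained by rotating the disk `D`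
(of radius 1/3, centered at `(0,1/2,0)` in the yz-plane) about the z-axis. -/
def LparamE (s : USphere 1) (d : EuclideanSpace ℝ (Fin 2)) : EuclideanSpace ℝ (Fin 3) :=
  WithLp.toLp 2 (fun i : Fin 3 =>
    if i = 0 then -((s : EuclideanSpace ℝ (Fin 2)) 1) * (1/2 + d 0)
    else if i = 1 then ((s : EuclideanSpace ℝ (Fin 2)) 0) * (1/2 + d 0)
    else d 1)

lemma circle_sq_sum (s : USphere 1) :
    ((s : EuclideanSpace ℝ (Fin 2)) 0) ^ 2 + ((s : EuclideanSpace ℝ (Fin 2)) 1) ^ 2 = 1 := by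
  obtain ⟨s, hs⟩ := s
  rw [mem_sphere_iff_norm, sub_zero, EuclideanSpace.norm_eq] at hs
  have h0 : (0:ℝ) ≤ ∑ i : Fin 2, ‖s i‖ ^ 2 := by positivity
  have := Real.sq_sqrt h0
  rw [hs] at this
  rw [Fin.sum_univ_two] at this
  simpa [Real.norm_eq_abs, sq_abs] using this.symm

lemma disk_sq_sum (d : EuclideanSpace ℝ (Fin 2)) (hd : d ∈ closedBall (0 : EuclideanSpace ℝ (Fin 2)) (1/3)) :
    (d 0) ^ 2 + (d 1) ^ 2 ≤ 1/9 := by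
  rw [mem_closedBall, dist_zero_right, EuclideanSpace.norm_eq] at hd
  have h0 : (0:ℝ) ≤ ∑ i : Fin 2, ‖d i‖ ^ 2 := by positivity
  have h1 := Real.sq_sqrt h0
  have h2 : (∑ i : Fin 2, ‖d i‖ ^ 2) ≤ 1/9 := by
    nlinarith [Real.sqrt_nonneg (∑ i : Fin 2, ‖d i‖ ^ 2)]
  rw [Fin.sum_univ_two] at h2
  simpa [Real.norm_eq_abs, sq_abs] using h2

lemma LparamE_normsq (s : USphere 1) (d : EuclideanSpace ℝ (Fin 2))
    (hd : d ∈ closedBall (0 : EuclideanSpace ℝ (Fin 2)) (1/3)) :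
    ‖LparamE s d‖ ^ 2 ≤ 7/10 := by
  have hs := circle_sq_sum s
  have hdd := disk_sq_sum d hd
  have hd0 : (d 0) ^ 2 ≤ 1/9 := by nlinarith [sq_nonneg (d 1)]
  have hd0' : d 0 ≤ 1/3 := by nlinarith
  rw [EuclideanSpace.norm_eq, Real.sq_sqrt (by positivity)]
  rw [Fin.sum_univ_three]
  simp only [LparamE]
  norm_num [Fin.ext_iff]
  simp only [Real.norm_eq_abs, mul_pow, sq_abs]
  have key : ((s : EuclideanSpace ℝ (Fin 2)) 1) ^ 2 * (1/2 + d 0) ^ 2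
      + ((s : EuclideanSpace ℝ (Fin 2)) 0) ^ 2 * (1/2 + d 0) ^ 2 = (1/2 + d 0) ^ 2 := by
    linear_combination (1/2 + d 0) ^ 2 * hs
  nlinarith [sq_nonneg (d 1), sq_nonneg (1/2 + d 0)]

lemma LparamE_mem (s : USphere 1) (d : EuclideanSpace ℝ (Fin 2))
    (hd : d ∈ closedBall (0 : EuclideanSpace ℝ (Fin 2)) (1/3)) :
    LparamE s d ∈ closedBall (0 : EuclideanSpace ℝ (Fin 3)) 1 := by
  rw [mem_closedBall, dist_zero_right]
  have h := LparamE_normsq s d hd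
  nlinarith [norm_nonneg (LparamE s d)]

/-- The solid torus `L`, viewed as a subset of `ℝP³` (it misses the boundary sphere). -/
def LsetRP : Set (RP 3) :=
  {p | ∃ (s : USphere 1) (d : EuclideanSpace ℝ (Fin 2))
    (hd : d ∈ closedBall (0 : EuclideanSpace ℝ (Fin 2)) (1/3)),
      q3 ⟨LparamE s d, LparamE_mem s d hd⟩ = p}

/-- The point of the boundary circle `∂D` corresponding to `z ∈ S¹` under the standard
identification `ℝP¹ ≅ ∂D` (via the squaring map on the circle). -/
def bdPtE (z : USphere 1) : EuclideanSpace ℝ (Fin 2) :=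
  WithLp.toLp 2 (fun i : Fin 2 =>
    if i = 0 then (((z : EuclideanSpace ℝ (Fin 2)) 0) ^ 2 - ((z : EuclideanSpace ℝ (Fin 2)) 1) ^ 2) / 3
    else (2 * ((z : EuclideanSpace ℝ (Fin 2)) 0) * ((z : EuclideanSpace ℝ (Fin 2)) 1)) / 3)

lemma bdPtE_mem (z : USphere 1) : bdPtE z ∈ closedBall (0 : EuclideanSpace ℝ (Fin 2)) (1/3) := by
  have hz := circle_sq_sum z
  rw [mem_closedBall, dist_zero_right, EuclideanSpace.norm_eq]
  have h1 : ∑ i : Fin 2, ‖bdPtE z i‖ ^ 2 = (1/3 : ℝ) ^ 2 := by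
    rw [Fin.sum_univ_two]
    simp only [bdPtE]
    norm_num [Fin.ext_iff]
    simp only [div_pow, mul_pow, sq_abs]
    linear_combination ((((z : EuclideanSpace ℝ (Fin 2)) 0) ^ 2 + ((z : EuclideanSpace ℝ (Fin 2)) 1) ^ 2 + 1) / 9) * hz
  rw [h1, Real.sqrt_sq (by norm_num)]

lemma bdPtE_neg (z w : USphere 1)
    (h : (z : EuclideanSpace ℝ (Fin 2)) = -(w : EuclideanSpace ℝ (Fin 2))) :
    bdPtE z = bdPtE w := by
  ext i
  have h0 : (z : EuclideanSpace ℝ (Fin 2)) 0 = -((w : EuclideanSpace ℝ (Fin 2)) 0) := by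
    rw [h]; rfl
  have h1 : (z : EuclideanSpace ℝ (Fin 2)) 1 = -((w : EuclideanSpace ℝ (Fin 2)) 1) := by
    rw [h]; rfl
  simp only [bdPtE, h0, h1]
  ring_nf

/-- The attaching map `S¹ × ℝP¹ → ℝP³` onto the boundary `∂L` of the solid torus,
using the identification of `ℝP¹` with `∂D`. -/
def attachM1 (s : USphere 1) : RP 1 → RP 3 :=
  Quotient.lift (fun z : USphere 1 => q3 ⟨LparamE s (bdPtE z), LparamE_mem s (bdPtE z) (bdPtE_mem z)⟩)
    (by
      rintro z w (h | h)
      · have : z = w := Subtype.ext h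
        rw [this]
      · have : bdPtE z = bdPtE w := bdPtE_neg z w h
        simp only [this])

/-- The underlying type of the first modification `M₁` of `ℝP³`: the disjoint union of
`ℝP³` minus the interior of the solid torus `L` and of `S¹ × ℝP²`. -/
abbrev M1Carrier : Type := {p : RP 3 // p ∉ interior LsetRP} ⊕ (USphere 1 × RP 2)

/-- The gluing relation for the first modification: a boundary point `attachM1 s c ∈ ∂L`
is identified with the point `(s, c) ∈ S¹ × ℝP¹ ⊂ S¹ × ℝP²`. -/
def M1Rel : M1Carrier → M1Carrier → Prop := fun p q =>
  ∃ (s : USphere 1) (c : RP 1) (h : attachM1 s c ∉ interior LsetRP),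
    p = Sum.inl ⟨attachM1 s c, h⟩ ∧ q = Sum.inr (s, rpIncl 1 c)

/-- The first modification `M₁` of `ℝP³`: remove the interior of the solid torus `L` and
attach `S¹ × ℝP²` via the map `S¹ × ℝP¹ → ∂L`. -/
def M1 : Type := Quot M1Rel

instance : TopologicalSpace M1 := by unfold M1; infer_instance

lemma rpIncl_not_mem_LsetRP (c : RP 2) : rpIncl 2 c ∉ LsetRP := by
  rintro ⟨s, d, hd, heq⟩
  obtain ⟨y, rfl⟩ := Quotient.exists_rep c
  have hmk : rpIncl 2 (Quotient.mk (antipodalSetoid 2) y)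
      = Quotient.mk (antipodalSetoid 3) (sphereIncl 2 y) := rfl
  rw [hmk] at heq
  have heq' := Quotient.exact heq
  have hpos : 0 < Real.sqrt (1 - ‖LparamE s d‖ ^ 2) := by
    apply Real.sqrt_pos.mpr
    have := LparamE_normsq s d hd
    linarith
  have hlift3 : hemiLift (LparamE s d) 3 = Real.sqrt (1 - ‖LparamE s d‖ ^ 2) := by
    simp only [hemiLift, PiLp.toLp_apply]
    rw [dif_neg (by decide)]
  have hincl3 : (sphereIncl 2 y : EuclideanSpace ℝ (Fin 4)) 3 = 0 := by
    show coordIncl 2 (y : EuclideanSpace ℝ (Fin 3)) 3 = 0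
    simp only [coordIncl, PiLp.toLp_apply]
    rw [dif_neg (by decide)]
  rcases heq' with h | h
  · have h3' : hemiLift (LparamE s d) 3 = (sphereIncl 2 y : EuclideanSpace ℝ (Fin 4)) 3 :=
      congrArg (fun v : EuclideanSpace ℝ (Fin 4) => v (3 : Fin 4)) h
    rw [hlift3, hincl3] at h3'
    linarith
  · have h3' : hemiLift (LparamE s d) 3 = -((sphereIncl 2 y : EuclideanSpace ℝ (Fin 4)) 3) :=
      congrArg (fun v : EuclideanSpace ℝ (Fin 4) => v (3 : Fin 4)) h
    rw [hlift3, hincl3, neg_zero] at h3'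
    linarith

lemma rpIncl_not_mem_interior_LsetRP (c : RP 2) : rpIncl 2 c ∉ interior LsetRP :=
  fun h => rpIncl_not_mem_LsetRP c (interior_subset h)

/-- The copy of the projective plane `ℝP² = q₃(∂B³)` inside the first modification `M₁`. -/
def rp2ToM1 : RP 2 → M1 :=
  fun c => Quot.mk M1Rel (Sum.inl ⟨rpIncl 2 c, rpIncl_not_mem_interior_LsetRP c⟩)

/-! ### The second modification of ℝP³ -/

/-- The solid torus `R = q₃(L) ⊂ ℝP³`, where `L ⊂ B³` is the cylinder `x² + y² ≤ 1/4`. -/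
def RsetRP : Set (RP 3) :=
  {p | ∃ x : UBall3, ((x : EuclideanSpace ℝ (Fin 3)) 0) ^ 2 + ((x : EuclideanSpace ℝ (Fin 3)) 1) ^ 2 ≤ 1/4
        ∧ q3 x = p}

/-- The copy of `ℝP² = q₃(∂B³)` inside `ℝP³`. -/
def RP2in3 : Set (RP 3) := Set.range (rpIncl 2)

/-- The disk `D = R ∩ ℝP²`. -/
def DsetM2 : Set (RP 3) := RsetRP ∩ RP2in3

/-- The boundary circle `∂D = D ∩ ∂R` of the disk `D`. -/
def bdDM2 : Set (RP 3) := DsetM2 ∩ frontier RsetRP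

/-- The subspace `T = S¹ × ℝP² ∪ {a} × ℝP³` of `S¹ × ℝP³`. -/
def TSpace (a : USphere 1) : Type :=
  {p : USphere 1 × RP 3 // (∃ c : RP 2, p.2 = rpIncl 2 c) ∨ p.1 = a}

instance (a : USphere 1) : TopologicalSpace (TSpace a) := by unfold TSpace; infer_instance

/-- The projection `π : T → S¹` onto the first coordinate. -/
def TProj (a : USphere 1) : C(TSpace a, USphere 1) :=
  ⟨fun p => p.val.1, by exact (continuous_fst.comp continuous_subtype_val)⟩

/-- The underlying type of the second modification `M₂` of `ℝP³`. -/
abbrev M2Carrier (a : USphere 1) : Type := {p : RP 3 // p ∉ interior RsetRP} ⊕ (TSpace a)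

/-- The gluing relation for the second modification, relative to a solid-torus structure
`φ : S¹ × D ≃ₜ R` on `R` and an identification `ψ : ∂D ≃ₜ ℝP¹`: a point `φ(s,d) ∈ ∂R` is
identified with the point `(s, ψ d) ∈ S¹ × ℝP¹ ⊂ S¹ × ℝP² ⊂ T`. -/
def M2Rel (a : USphere 1) (φ : (USphere 1 × ↥DsetM2) ≃ₜ ↥RsetRP) (ψ : ↥bdDM2 ≃ₜ RP 1) :
    M2Carrier a → M2Carrier a → Prop := fun p q =>
  ∃ (s : USphere 1) (d : ↥bdDM2) (h : (φ (s, ⟨d.val, d.prop.1⟩)).val ∉ interior RsetRP),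
    p = Sum.inl ⟨(φ (s, ⟨d.val, d.prop.1⟩)).val, h⟩ ∧
    q = Sum.inr ⟨(s, rpIncl 2 (rpIncl 1 (ψ d))), Or.inl ⟨rpIncl 1 (ψ d), rfl⟩⟩

/-- The second modification `M₂` of `ℝP³`: remove the interior of the solid torus `R` and
attach `S¹ × ℝP² ∪ {a} × ℝP³` via the inclusion `∂R = S¹ × ∂D → S¹ × ℝP² ∪ {a} × ℝP³`. -/
def M2 (a : USphere 1) (φ : (USphere 1 × ↥DsetM2) ≃ₜ ↥RsetRP) (ψ : ↥bdDM2 ≃ₜ RP 1) : Type :=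
  Quot (M2Rel a φ ψ)

instance (a : USphere 1) (φ : (USphere 1 × ↥DsetM2) ≃ₜ ↥RsetRP) (ψ : ↥bdDM2 ≃ₜ RP 1) :
    TopologicalSpace (M2 a φ ψ) := by unfold M2; infer_instance


/-!
Given `f : A → ℝP²`, extend `A → ℝP² ⊂ ℝP^∞` to `G : X → ℝP^∞` and pull back the double cover
`S^∞ → ℝP^∞` along `G`. Over `A` this cover is the pullback of `S² → ℝP²` along `f`, so `f`
lifts to an odd map from the cover to `S²`. The cover is trivial over the closed sets of `X`
mapped into the lines not orthogonal to a fixed vector `u` (choose the representative on the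
side of `u`), and there an odd map is just a map to `S²`; since `S² ∈ AE(X)`, the odd map extends
over a finite cover of `X` by such sets, one set at a time. An odd map on the whole cover
descends to a map `X → ℝP²`.
-/

open Topology
open scoped RealInnerProductSpace

abbrev SphereInf : Type := (sphere (0 : Hilbertl2) 1 : Set Hilbertl2)

namespace RPInf

def mk : SphereInf → RPInf := Quotient.mk antipodalSetoidInf

def out (c : RPInf) : SphereInf := Quotient.out c

lemma mk_out (c : RPInf) : mk c.out = c := Quotient.out_eq c

lemma mk_surjective : Function.Surjective mk := Quotient.mk_surjective

lemma mk_neg (v : SphereInf) : mk (-v) = mk v := Quotient.sound (Or.inr rfl)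

lemma mk_eq_mk_iff {v w : SphereInf} : mk v = mk w ↔ v = w ∨ v = -w := by
  show Quotient.mk antipodalSetoidInf v = Quotient.mk antipodalSetoidInf w ↔ _
  rw [Quotient.eq]
  exact or_congr Subtype.ext_iff.symm (Subtype.ext_iff (a2 := -w)).symm

lemma isOpenQuotientMap_mk : IsOpenQuotientMap mk := by
  refine ⟨mk_surjective, continuous_quot_mk, fun U hU => ?_⟩
  have hsat : mk ⁻¹' (mk '' U) = U ∪ -U := by
    ext v
    simp only [mem_preimage, mem_image, mem_union, Set.mem_neg, mk_eq_mk_iff]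
    constructor
    · rintro ⟨w, hw, rfl | rfl⟩
      · exact .inl hw
      · exact .inr hw
    · rintro (hv | hv)
      · exact ⟨v, hv, .inl rfl⟩
      · exact ⟨-v, hv, .inr rfl⟩
  have hq : IsQuotientMap mk := isQuotientMap_quot_mk
  rw [← hq.isOpen_preimage]
  exact hsat ▸ hU.union hU.neg

def transverse (u : Hilbertl2) : Set RPInf := mk '' {v | ⟪(v : Hilbertl2), u⟫ ≠ 0}

lemma isOpen_transverse (u : Hilbertl2) : IsOpen (transverse u) :=
  isOpenQuotientMap_mk.isOpenMap _ <|
    isOpen_compl_singleton.preimage (continuous_subtype_val.inner continuous_const)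

lemma exists_mem_transverse (c : RPInf) : ∃ u, c ∈ transverse u := by
  obtain ⟨v, rfl⟩ := mk_surjective c
  exact ⟨v, v, by simp, rfl⟩

lemma exists_mk_eq_and_inner_pos {u : Hilbertl2} {c : RPInf} (hc : c ∈ transverse u) :
    ∃ v, mk v = c ∧ 0 < ⟪(v : Hilbertl2), u⟫ := by
  obtain ⟨v, hv, rfl⟩ := hc
  rcases hv.lt_or_gt with hneg | hpos
  · exact ⟨-v, mk_neg v, by simpa [inner_neg_left] using hneg⟩
  · exact ⟨v, rfl, hpos⟩

lemma inner_ne_zero_of_mk_mem_transverse {u : Hilbertl2} {v : SphereInf}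
    (hv : mk v ∈ transverse u) : ⟪(v : Hilbertl2), u⟫ ≠ 0 := by
  obtain ⟨w, hw, hwu⟩ := exists_mk_eq_and_inner_pos hv
  rcases mk_eq_mk_iff.1 hw with rfl | rfl
  · exact hwu.ne'
  · simpa [inner_neg_left] using hwu.ne

def hemisphereRep (u : Hilbertl2) (c : RPInf) : SphereInf :=
  if ⟪(c.out : Hilbertl2), u⟫ < 0 then -c.out else c.out

lemma mk_hemisphereRep (u : Hilbertl2) (c : RPInf) : mk (hemisphereRep u c) = c := by
  unfold hemisphereRep
  split_ifs
  · rw [mk_neg, mk_out]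
  · exact mk_out c

lemma hemisphereRep_mk {u : Hilbertl2} {v : SphereInf} (hv : 0 < ⟪(v : Hilbertl2), u⟫) :
    hemisphereRep u (mk v) = v := by
  unfold hemisphereRep
  rcases mk_eq_mk_iff.1 (mk_out (mk v)) with h | h <;> rw [h]
  · rw [if_neg hv.not_gt]
  · rw [if_pos (by simpa [inner_neg_left] using hv), neg_neg]

lemma inner_hemisphereRep_pos {u : Hilbertl2} {c : RPInf} (hc : c ∈ transverse u) :
    0 < ⟪(hemisphereRep u c : Hilbertl2), u⟫ := by
  obtain ⟨v, rfl, hv⟩ := exists_mk_eq_and_inner_pos hc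
  rwa [hemisphereRep_mk hv]

lemma continuousOn_hemisphereRep (u : Hilbertl2) :
    ContinuousOn (hemisphereRep u) (transverse u) := by
  intro c hc
  obtain ⟨v, rfl, hv⟩ := exists_mk_eq_and_inner_pos hc
  refine ContinuousAt.continuousWithinAt ?_
  rw [← isOpenQuotientMap_mk.continuousAt_comp_iff]
  have hopen : IsOpen {w : SphereInf | 0 < ⟪(w : Hilbertl2), u⟫} :=
    isOpen_lt continuous_const (continuous_subtype_val.inner continuous_const)
  exact continuousAt_id.congr <|
    Filter.eventually_of_mem (hopen.mem_nhds hv) fun w hw => (hemisphereRep_mk hw).symm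

end RPInf

theorem ContinuousOn.inter_union_of_isClosed {α β : Type*} [TopologicalSpace α]
    [TopologicalSpace β] {f : α → β} {u s t : Set α} (hfs : ContinuousOn f (u ∩ s))
    (hft : ContinuousOn f (u ∩ t)) (hs : IsClosed s) (ht : IsClosed t) :
    ContinuousOn f (u ∩ (s ∪ t)) := by
  have key : ∀ {s : Set α}, IsClosed s → ContinuousOn f (u ∩ s) →
      ∀ x ∈ u, ContinuousWithinAt f (u ∩ s) x := fun {s} hs hfs x hxu => by
    by_cases hx : x ∈ s
    · exact hfs x ⟨hxu, hx⟩
    · exact continuousWithinAt_of_notMem_closure fun hcl =>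
        hx (hs.closure_subset (closure_mono inter_subset_right hcl))
  rw [inter_union_distrib_left]
  exact fun x hx =>
    have hxu : x ∈ u := hx.elim And.left And.left
    (key hs hfs x hxu).union (key ht hft x hxu)

lemma pcov_neg {n : ℕ} (x : USphere n) : pcov n (-x) = pcov n x := Quotient.sound (Or.inr rfl)

open RPInf

variable {X : Type*} [TopologicalSpace X] {n : ℕ}

def doubleCover (G : C(X, RPInf)) : Set (X × SphereInf) := {p | mk p.2 = G p.1}

def IsOddOver (G : C(X, RPInf)) (E : Set X) (h : X × SphereInf → USphere n) : Prop :=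
  ContinuousOn h (doubleCover G ∩ Prod.fst ⁻¹' E) ∧
    ∀ p ∈ doubleCover G ∩ Prod.fst ⁻¹' E, h (p.1, -p.2) = -h p

def hemisphereLift (G : C(X, RPInf)) (u : Hilbertl2) (y : X) : X × SphereInf :=
  (y, hemisphereRep u (G y))

def signedExtension (u : Hilbertl2) (F : C(X, USphere n)) (p : X × SphereInf) : USphere n :=
  if 0 < ⟪(p.2 : Hilbertl2), u⟫ then F p.1 else -F p.1

variable {G : C(X, RPInf)}

lemma eq_or_eq_neg_of_mem_doubleCover {p : X × SphereInf} (hp : p ∈ doubleCover G)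
    {v : SphereInf} (hv : mk v = G p.1) : p.2 = v ∨ p.2 = -v :=
  mk_eq_mk_iff.1 (hp.trans hv.symm)

lemma neg_snd_mem_doubleCover {p : X × SphereInf} (hp : p ∈ doubleCover G) :
    (p.1, -p.2) ∈ doubleCover G :=
  (mk_neg p.2).trans hp

lemma hemisphereLift_mem_doubleCover (u : Hilbertl2) (y : X) :
    hemisphereLift G u y ∈ doubleCover G :=
  mk_hemisphereRep u (G y)

lemma continuousOn_hemisphereLift (u : Hilbertl2) :
    ContinuousOn (hemisphereLift G u) (G ⁻¹' transverse u) :=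
  continuousOn_id.prodMk <| (continuousOn_hemisphereRep u).comp G.continuous.continuousOn
    fun _ hy => hy

lemma isOddOver_signedExtension {C : Set X} {u : Hilbertl2} (hCu : C ⊆ G ⁻¹' transverse u)
    (F : C(X, USphere n)) : IsOddOver G C (signedExtension u F) := by
  have hinner : Continuous fun p : X × SphereInf => ⟪(p.2 : Hilbertl2), u⟫ :=
    (continuous_subtype_val.comp continuous_snd).inner continuous_const
  have hne : ∀ p ∈ doubleCover G ∩ Prod.fst ⁻¹' C, ⟪(p.2 : Hilbertl2), u⟫ ≠ 0 :=
    fun p hp => inner_ne_zero_of_mk_mem_transverse (hp.1 ▸ hCu hp.2)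
  refine ⟨ContinuousOn.if
      (fun p hp => absurd (frontier_lt_subset_eq continuous_const hinner hp.2) (hne p hp.1).symm)
      (F.continuous.comp continuous_fst).continuousOn
      (F.continuous.comp continuous_fst).neg.continuousOn, fun p hp => ?_⟩
  simp only [signedExtension, coe_neg_sphere, inner_neg_left, Left.neg_pos_iff]
  rcases (hne p hp).lt_or_gt with hlt | hgt
  · rw [if_pos hlt, if_neg hlt.not_gt, neg_neg]
  · rw [if_neg hgt.not_gt, if_pos hgt]

namespace IsOddOver

variable {A E C : Set X} {h : X × SphereInf → USphere n}

lemma mono {E' : Set X} (hh : IsOddOver G E h) (hE' : E' ⊆ E) : IsOddOver G E' h :=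
  ⟨hh.1.mono (inter_subset_inter_right _ (preimage_mono hE')),
    fun p hp => hh.2 p ⟨hp.1, hE' hp.2⟩⟩

lemma union [DecidablePred (· ∈ E)] {h₁ h₂ : X × SphereInf → USphere n}
    (hh₁ : IsOddOver G E h₁) (hh₂ : IsOddOver G C h₂) (hE : IsClosed E) (hC : IsClosed C)
    (heq : EqOn h₁ h₂ (doubleCover G ∩ Prod.fst ⁻¹' (E ∩ C))) :
    IsOddOver G (E ∪ C) fun p => if p.1 ∈ E then h₁ p else h₂ p := by
  have onE : EqOn (fun p => if p.1 ∈ E then h₁ p else h₂ p) h₁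
      (doubleCover G ∩ Prod.fst ⁻¹' E) :=
    fun p hp => if_pos hp.2
  have onC : EqOn (fun p => if p.1 ∈ E then h₁ p else h₂ p) h₂
      (doubleCover G ∩ Prod.fst ⁻¹' C) := fun p hp => by
    dsimp only
    split_ifs with hpE
    exacts [heq ⟨hp.1, hpE, hp.2⟩, rfl]
  refine ⟨(hh₁.1.congr onE).inter_union_of_isClosed (hh₂.1.congr onC)
    (hE.preimage continuous_fst) (hC.preimage continuous_fst), ?_⟩
  rintro p ⟨hp, hpE | hpC⟩
  · rw [onE ⟨neg_snd_mem_doubleCover hp, hpE⟩, onE ⟨hp, hpE⟩, hh₁.2 p ⟨hp, hpE⟩]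
  · rw [onC ⟨neg_snd_mem_doubleCover hp, hpC⟩, onC ⟨hp, hpC⟩, hh₂.2 p ⟨hp, hpC⟩]

lemma exists_extend_union (hS : IsAbsoluteExtensor X (USphere n)) (hh : IsOddOver G E h)
    (hE : IsClosed E) (hC : IsClosed C) {u : Hilbertl2} (hCu : C ⊆ G ⁻¹' transverse u) :
    ∃ h', IsOddOver G (E ∪ C) h' ∧ EqOn h' h (doubleCover G ∩ Prod.fst ⁻¹' E) := by
  classical
  have hlift : ContinuousOn (h ∘ hemisphereLift G u) (E ∩ C) :=
    hh.1.comp ((continuousOn_hemisphereLift u).mono (inter_subset_right.trans hCu))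
      fun y hy => ⟨hemisphereLift_mem_doubleCover u y, hy.1⟩
  obtain ⟨F, hF⟩ := hS (E ∩ C) (hE.inter hC) ⟨_, hlift.domRestrict⟩
  refine ⟨_, hh.union (isOddOver_signedExtension hCu F) hE hC ?_, fun p hp => if_pos hp.2⟩
  rintro ⟨x, v⟩ ⟨hv, hxE, hxC⟩
  have hFx : F x = h (x, hemisphereRep u (G x)) := hF ⟨x, hxE, hxC⟩
  have hpos := inner_hemisphereRep_pos (hCu hxC)
  rcases eq_or_eq_neg_of_mem_doubleCover hv (mk_hemisphereRep u (G x)) with rfl | rfl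
  · exact ((if_pos hpos).trans hFx).symm
  · have hodd : h (x, hemisphereRep u (G x)) = -h (x, -hemisphereRep u (G x)) := by
      simpa only [neg_neg] using hh.2 _ ⟨hv, hxE⟩
    have hneg : ¬ 0 < ⟪((-hemisphereRep u (G x) : SphereInf) : Hilbertl2), u⟫ := by
      simpa only [coe_neg_sphere, inner_neg_left, Left.neg_pos_iff] using hpos.not_gt
    rw [signedExtension, if_neg hneg, hFx, hodd, neg_neg]

lemma exists_extend_biUnion (hS : IsAbsoluteExtensor X (USphere n)) (hh : IsOddOver G A h)
    (hA : IsClosed A) {ι : Type*} {N : ι → Set X} (hN : ∀ i, IsClosed (N i))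
    {u : ι → Hilbertl2} (hNu : ∀ i, N i ⊆ G ⁻¹' transverse (u i)) (t : Finset ι) :
    ∃ h', IsOddOver G (A ∪ ⋃ i ∈ t, N i) h' ∧ EqOn h' h (doubleCover G ∩ Prod.fst ⁻¹' A) := by
  classical
  induction t using Finset.induction_on with
  | empty => exact ⟨h, by simpa using hh, eqOn_refl _ _⟩
  | insert i t _ ih =>
    obtain ⟨h₁, hh₁, heq₁⟩ := ih
    have hclosed : IsClosed (A ∪ ⋃ k ∈ t, N k) :=
      hA.union (isClosed_biUnion_finset fun k _ => hN k)
    obtain ⟨h₂, hh₂, heq₂⟩ := hh₁.exists_extend_union hS hclosed (hN i) (hNu i)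
    refine ⟨h₂, ?_, fun p hp => (heq₂ ⟨hp.1, .inl hp.2⟩).trans (heq₁ hp)⟩
    rwa [Finset.set_biUnion_insert, union_left_comm, union_comm]

lemma exists_extend_univ [CompactSpace X] [RegularSpace X]
    (hS : IsAbsoluteExtensor X (USphere n)) (hh : IsOddOver G A h) (hA : IsClosed A) :
    ∃ h', IsOddOver G univ h' ∧ EqOn h' h (doubleCover G ∩ Prod.fst ⁻¹' A) := by
  have hloc : ∀ x, ∃ u, ∃ N ∈ 𝓝 x, IsClosed N ∧ N ⊆ G ⁻¹' transverse u := fun x => by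
    obtain ⟨u, hu⟩ := exists_mem_transverse (G x)
    exact ⟨u, exists_mem_nhds_isClosed_subset
      (((isOpen_transverse u).preimage G.continuous).mem_nhds hu)⟩
  choose u N hNx hN hNu using hloc
  obtain ⟨t, -, ht⟩ := isCompact_univ.elim_nhds_subcover N fun x _ => hNx x
  obtain ⟨h', hh', heq⟩ := hh.exists_extend_biUnion hS hA hN hNu t
  exact ⟨h', hh'.mono (ht.trans subset_union_right), heq⟩

lemma pcov_eq_of_fst_eq (hh : IsOddOver G univ h) {p q : X × SphereInf}
    (hp : p ∈ doubleCover G) (hq : q ∈ doubleCover G) (hpq : p.1 = q.1) :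
    pcov n (h p) = pcov n (h q) := by
  obtain ⟨x, v⟩ := p
  obtain ⟨y, w⟩ := q
  obtain rfl : x = y := hpq
  rcases eq_or_eq_neg_of_mem_doubleCover hp hq with rfl | rfl
  · rfl
  · rw [hh.2 _ ⟨hq, trivial⟩, pcov_neg]

lemma exists_descend (hh : IsOddOver G univ h) :
    ∃ g : C(X, RP n), ∀ p ∈ doubleCover G, g p.1 = pcov n (h p) := by
  set g : X → RP n := fun y => pcov n (h (y, (G y).out))
  have hg : ∀ p ∈ doubleCover G, g p.1 = pcov n (h p) := fun p hp =>
    hh.pcov_eq_of_fst_eq (mk_out (G p.1)) hp rfl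
  refine ⟨⟨g, continuous_iff_continuousAt.2 fun x => ?_⟩, hg⟩
  obtain ⟨u, hu⟩ := exists_mem_transverse (G x)
  have hcont : ContinuousOn (pcov n ∘ h ∘ hemisphereLift G u) (G ⁻¹' transverse u) :=
    continuous_quot_mk.comp_continuousOn <| hh.1.comp (continuousOn_hemisphereLift u)
      fun y _ => ⟨hemisphereLift_mem_doubleCover u y, trivial⟩
  exact (hcont.continuousAt (((isOpen_transverse u).preimage G.continuous).mem_nhds hu)).congr <|
    Filter.Eventually.of_forall fun y => (hg _ (hemisphereLift_mem_doubleCover u y)).symm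

end IsOddOver

section Embedding

variable (j : EuclideanSpace ℝ (Fin (n+1)) →ₗᵢ[ℝ] Hilbertl2)

def toSphereInf (x : USphere n) : SphereInf := ⟨j x, by simp⟩

def rpToRPInf : RP n → RPInf :=
  Quotient.lift (fun x => mk (toSphereInf j x)) <| by
    rintro x y (hxy | hxy) <;> refine mk_eq_mk_iff.2 ?_
    · exact .inl (Subtype.ext (congrArg j hxy))
    · exact .inr (Subtype.ext ((congrArg j hxy).trans (map_neg j _)))

lemma continuous_rpToRPInf : Continuous (rpToRPInf j) :=
  Continuous.quotient_lift (continuous_quot_mk.comp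
    ((j.continuous.comp continuous_subtype_val).subtype_mk _)) _

variable {j}

lemma exists_pcov_eq_of_mk_eq_rpToRPInf {v : SphereInf} {c : RP n}
    (hv : mk v = rpToRPInf j c) :
    ∃ w : USphere n, pcov n w = c ∧ (v = toSphereInf j w ∨ v = -toSphereInf j w) := by
  obtain ⟨w, rfl⟩ := Quotient.exists_rep c
  exact ⟨w, rfl, mk_eq_mk_iff.1 hv⟩

lemma exists_isOddOver_of_eq_rpToRPInf {A : Set X} {f : C(A, RP n)}
    (hG : ∀ a : A, G a = rpToRPInf j (f a)) :
    ∃ h₀ : X × SphereInf → USphere n, IsOddOver G A h₀ ∧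
      ∀ (a : A) (v : SphereInf), mk v = G a → pcov n (h₀ (a, v)) = f a := by
  classical
  -- `j†` inverts `j` on its image, so it sends the fibre `±j w` over `f a` to `±w`.
  set π := j.toContinuousLinearMap.adjoint
  have hπ : ∀ x, π (j x) = x := fun x => congr($(j.adjoint_comp_self) x)
  have hfib : ∀ (a : A) (v : SphereInf), mk v = G a →
      ∃ w : USphere n, pcov n w = f a ∧ (π v = w ∨ π v = -(w : EuclideanSpace ℝ (Fin (n+1)))) := by
    intro a v hv
    obtain ⟨w, hw, rfl | rfl⟩ := exists_pcov_eq_of_mk_eq_rpToRPInf (hv.trans (hG a))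
    · exact ⟨w, hw, .inl (hπ w)⟩
    · exact ⟨w, hw, .inr (by simp [toSphereInf, hπ])⟩
  have hsph : ∀ p ∈ doubleCover G ∩ Prod.fst ⁻¹' A, π p.2 ∈ sphere 0 1 := by
    rintro p ⟨hp, hpA⟩
    obtain ⟨w, -, hw | hw⟩ := hfib ⟨p.1, hpA⟩ p.2 hp <;> rw [hw]
    exacts [w.2, by simp]
  obtain ⟨x₀⟩ : Nonempty (USphere n) := (NormedSpace.sphere_nonempty.2 zero_le_one).to_subtype
  set h₀ : X × SphereInf → USphere n := fun p =>
    if hp : π p.2 ∈ sphere 0 1 then ⟨_, hp⟩ else x₀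
  have hcoe : ∀ p ∈ doubleCover G ∩ Prod.fst ⁻¹' A,
      (h₀ p : EuclideanSpace ℝ (Fin (n+1))) = π p.2 :=
    fun p hp => by simp only [h₀, dif_pos (hsph p hp)]
  refine ⟨h₀, ⟨?_, fun p hp => ?_⟩, fun a v hv => ?_⟩
  · refine IsInducing.subtypeVal.continuousOn_iff.2 ?_
    exact (π.continuous.comp (continuous_subtype_val.comp continuous_snd)).continuousOn.congr hcoe
  · have hp' : (p.1, -p.2) ∈ doubleCover G ∩ Prod.fst ⁻¹' A := ⟨neg_snd_mem_doubleCover hp.1, hp.2⟩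
    exact Subtype.ext <| by rw [hcoe _ hp', coe_neg_sphere, map_neg, coe_neg_sphere, hcoe p hp]
  · obtain ⟨w, hw, hπw | hπw⟩ := hfib a v hv
    · rw [show h₀ (a, v) = w from Subtype.ext ((hcoe _ ⟨hv, a.2⟩).trans hπw), hw]
    · rw [show h₀ (a, v) = -w from Subtype.ext ((hcoe _ ⟨hv, a.2⟩).trans hπw), pcov_neg, hw]

end Embedding

lemma orthonormal_lp_single {ι 𝕜 : Type*} [RCLike 𝕜] [DecidableEq ι] :
    Orthonormal 𝕜 fun i : ι => lp.single 2 i (1 : 𝕜) := by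
  rw [orthonormal_iff_ite]
  intro i k
  rw [lp.inner_single_left, lp.single_apply]
  split_ifs <;> simp_all

def euclideanToL2 (n : ℕ) : EuclideanSpace ℝ (Fin (n+1)) →ₗᵢ[ℝ] Hilbertl2 :=
  let b := (EuclideanSpace.basisFun (Fin (n+1)) ℝ).toBasis
  LinearMap.isometryOfOrthonormal (v := b) (b.constr ℝ fun i => lp.single 2 (i : ℕ) 1)
    (EuclideanSpace.basisFun (Fin (n+1)) ℝ).orthonormal <| by
      convert orthonormal_lp_single.comp _ Fin.val_injective
      ext1 i
      exact b.constr_basis ℝ _ i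

theorem isAbsoluteExtensor_rp_of_sphere [CompactSpace X] [RegularSpace X]
    (hS : IsAbsoluteExtensor X (USphere n)) (hZ2 : IsAbsoluteExtensor X RPInf) :
    IsAbsoluteExtensor X (RP n) := by
  intro A hA f
  obtain ⟨G, hG⟩ := hZ2 A hA
    ⟨rpToRPInf (euclideanToL2 n) ∘ f, (continuous_rpToRPInf _).comp f.continuous⟩
  obtain ⟨h₀, hh₀, hh₀f⟩ := exists_isOddOver_of_eq_rpToRPInf hG
  obtain ⟨h, hh, hhh₀⟩ := hh₀.exists_extend_univ hS hA
  obtain ⟨g, hg⟩ := hh.exists_descend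
  refine ⟨g, fun a => ?_⟩
  obtain ⟨v, hv⟩ := mk_surjective (G a)
  rw [hg (a, v) hv, hhh₀ ⟨hv, a.2⟩, hh₀f a v hv]

/-- If `X` is a compactum with `dim X ≤ 2` and `dim_{ℤ/2} X ≤ 1` (i.e. `ℝP^∞ ∈ AE(X)`),
then `ℝP² ∈ AE(X)`. -/
theorem rp2_absolute_extensor_of_dim_le_two
    (X : Type) [TopologicalSpace X] [CompactSpace X] [TopologicalSpace.MetrizableSpace X]
    (hdim : IsAbsoluteExtensor X (USphere 2))
    (hZ2 : IsAbsoluteExtensor X RPInf) :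
    IsAbsoluteExtensor X (RP 2) :=
  isAbsoluteExtensor_rp_of_sphere hdim hZ2
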